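/- Let d ∈ {2,3} and s ∈ [0, 1/2]. There exists a constant C > 0, depending only on d and s, such that for all k, t > 0 with kt ≥ 1 and all measurable functions F, G : ℝ^d → [0, ∞), ∫_{{ξ : ‖ξ⁻‖ > 3kt/2}} (1 + ‖ξ‖²)^s · ((‖ξ⁻‖ + kt)² + ξ_d²)^{−1/2} · F(ξ) G(ξ) dξ ≤ C (kt)^{2s−1} ‖F‖_{L²(ℝ^d)} ‖G‖_{L²(ℝ^d)}. -/

import Mathlib

open MeasureTheory
open scoped ENNReal

/-- `‖ξ⁻‖`, the Euclidean norm of the first `d − 1` coordinates of `ξ ∈ ℝ^d`. -/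
noncomputable def xiMinusNorm {d : ℕ} (ξ : EuclideanSpace ℝ (Fin d)) : ℝ :=
  Real.sqrt (∑ i ∈ Finset.univ.filter (fun i : Fin d => (i : ℕ) < d - 1), ξ i ^ 2)

/-- `ξ_d`, the last coordinate of `ξ ∈ ℝ^d`. -/
noncomputable def xiLast {d : ℕ} (hd : 0 < d) (ξ : EuclideanSpace ℝ (Fin d)) : ℝ :=
  ξ ⟨d - 1, Nat.sub_lt hd one_pos⟩

/-! The weight is bounded pointwise by `2 ^ s (kt) ^ (2s - 1)`: with `A = (‖ξ⁻‖ + kt)² + ξ_d²`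
one has `(kt)² ≤ A` and `1 + ‖ξ‖² ≤ 2A` (as `kt ≥ 1`), so the weight is at most
`2 ^ s A ^ (s - 1/2) ≤ 2 ^ s (kt) ^ (2s - 1)` because `s ≤ 1/2`. The estimate then follows from
the Cauchy–Schwarz inequality. -/

lemma xiMinusNorm_nonneg {d : ℕ} (ξ : EuclideanSpace ℝ (Fin d)) : 0 ≤ xiMinusNorm ξ :=
  Real.sqrt_nonneg _

lemma norm_sq_eq_xiMinusNorm_sq_add_xiLast_sq {d : ℕ} (hd : 0 < d)
    (ξ : EuclideanSpace ℝ (Fin d)) : ‖ξ‖ ^ 2 = xiMinusNorm ξ ^ 2 + xiLast hd ξ ^ 2 := by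
  have hlast : Finset.univ.filter (fun i : Fin d => ¬ (i : ℕ) < d - 1)
      = {⟨d - 1, Nat.sub_lt hd one_pos⟩} := by
    ext i
    simp only [Finset.mem_filter, Finset.mem_univ, true_and, Finset.mem_singleton, Fin.ext_iff]
    omega
  rw [EuclideanSpace.norm_sq_eq, xiMinusNorm, Real.sq_sqrt (by positivity),
    ← Finset.sum_filter_add_sum_filter_not Finset.univ (fun i : Fin d => (i : ℕ) < d - 1), hlast,
    Finset.sum_singleton]
  simp [xiLast]

lemma rpow_mul_rpow_neg_half_le {s a A x : ℝ} (hs : 0 ≤ s) (hs' : s ≤ 1 / 2) (ha : 0 < a)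
    (haA : a ^ 2 ≤ A) (hx : 0 ≤ x) (hxA : x ≤ 2 * A) :
    x ^ s * A ^ (-(1 / 2) : ℝ) ≤ 2 ^ s * a ^ (2 * s - 1) := by
  have hA : 0 < A := (pow_pos ha 2).trans_le haA
  calc x ^ s * A ^ (-(1 / 2) : ℝ)
      ≤ (2 * A) ^ s * A ^ (-(1 / 2) : ℝ) := by gcongr
    _ = 2 ^ s * A ^ (s - 1 / 2) := by
        rw [Real.mul_rpow zero_le_two hA.le, mul_assoc, ← Real.rpow_add hA, sub_eq_add_neg]
    _ ≤ 2 ^ s * (a ^ 2) ^ (s - 1 / 2) := by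
        exact mul_le_mul_of_nonneg_left
          (Real.rpow_le_rpow_of_nonpos (by positivity) haA (by linarith)) (by positivity)
    _ = 2 ^ s * a ^ (2 * s - 1) := by
        rw [← Real.rpow_natCast, ← Real.rpow_mul ha.le]
        congr 2
        push_cast
        ring

lemma one_add_norm_sq_rpow_mul_rpow_neg_half_le {d : ℕ} (hd : 0 < d) {s K : ℝ} (hs : 0 ≤ s) (hs' : s ≤ 1 / 2) (hK : 1 ≤ K)
    (ξ : EuclideanSpace ℝ (Fin d)) :
    (1 + ‖ξ‖ ^ 2) ^ s * ((xiMinusNorm ξ + K) ^ 2 + xiLast hd ξ ^ 2) ^ (-(1 / 2) : ℝ)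
      ≤ 2 ^ s * K ^ (2 * s - 1) := by
  have hm := xiMinusNorm_nonneg ξ
  have hnorm := norm_sq_eq_xiMinusNorm_sq_add_xiLast_sq hd ξ
  refine rpow_mul_rpow_neg_half_le hs hs' (by linarith) ?_ (by positivity) ?_
  · nlinarith [sq_nonneg (xiLast hd ξ)]
  · nlinarith [sq_nonneg (xiLast hd ξ)]

lemma lintegral_ofReal_mul_le_sqrt_mul_sqrt {α : Type*} [MeasurableSpace α] (μ : Measure α)
    {F G : α → ℝ} (hF : Measurable F) (hG : Measurable G) (hF0 : ∀ x, 0 ≤ F x)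
    (hG0 : ∀ x, 0 ≤ G x) :
    ∫⁻ x, ENNReal.ofReal (F x) * ENNReal.ofReal (G x) ∂μ
      ≤ (∫⁻ x, ENNReal.ofReal (F x ^ 2) ∂μ) ^ (1 / 2 : ℝ)
        * (∫⁻ x, ENNReal.ofReal (G x ^ 2) ∂μ) ^ (1 / 2 : ℝ) := by
  have hsq : ∀ {H : α → ℝ}, (∀ x, 0 ≤ H x) →
      ∀ x, ENNReal.ofReal (H x) ^ (2 : ℝ) = ENNReal.ofReal (H x ^ 2) := fun hH0 x => by
    rw [ENNReal.ofReal_rpow_of_nonneg (hH0 x) zero_le_two, Real.rpow_two]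
  have hCS := ENNReal.lintegral_mul_le_Lp_mul_Lq μ Real.HolderConjugate.two_two
    hF.ennreal_ofReal.aemeasurable hG.ennreal_ofReal.aemeasurable
  simp_rw [hsq hF0, hsq hG0] at hCS
  exact hCS

lemma setLIntegral_ofReal_mul_mul_le {α : Type*} [MeasurableSpace α] (μ : Measure α)
    (S : Set α) {w F G : α → ℝ} {c : ℝ} (hc : 0 ≤ c) (hw : ∀ x, w x ≤ c)
    (hF : Measurable F) (hG : Measurable G) (hF0 : ∀ x, 0 ≤ F x) (hG0 : ∀ x, 0 ≤ G x) :
    ∫⁻ x in S, ENNReal.ofReal (w x * F x * G x) ∂μ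
      ≤ ENNReal.ofReal c * (∫⁻ x, ENNReal.ofReal (F x ^ 2) ∂μ) ^ (1 / 2 : ℝ)
        * (∫⁻ x, ENNReal.ofReal (G x ^ 2) ∂μ) ^ (1 / 2 : ℝ) := by
  have hpointwise : ∀ x, ENNReal.ofReal (w x * F x * G x)
      ≤ ENNReal.ofReal c * (ENNReal.ofReal (F x) * ENNReal.ofReal (G x)) := fun x => by
    rw [← ENNReal.ofReal_mul (hF0 x), ← ENNReal.ofReal_mul hc, ← mul_assoc]
    exact ENNReal.ofReal_le_ofReal
      (mul_le_mul_of_nonneg_right (mul_le_mul_of_nonneg_right (hw x) (hF0 x)) (hG0 x))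
  calc ∫⁻ x in S, ENNReal.ofReal (w x * F x * G x) ∂μ
      ≤ ∫⁻ x, ENNReal.ofReal (w x * F x * G x) ∂μ := setLIntegral_le_lintegral _ _
    _ ≤ ∫⁻ x, ENNReal.ofReal c * (ENNReal.ofReal (F x) * ENNReal.ofReal (G x)) ∂μ :=
        lintegral_mono hpointwise
    _ ≤ _ := by
        rw [lintegral_const_mul' _ _ ENNReal.ofReal_ne_top, mul_assoc]
        gcongr
        exact lintegral_ofReal_mul_le_sqrt_mul_sqrt μ hF hG hF0 hG0

/-- Estimate of the term `I₁`, over the region `{‖ξ⁻‖ > 3kt/2}` in the unique continuation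
argument for the Helmholtz equation with a random potential. -/
theorem stmt_4 (d : ℕ) (hd : d = 2 ∨ d = 3) (s : ℝ) (hs : 0 ≤ s) (hs' : s ≤ 1 / 2) :
    ∃ C > (0 : ℝ), ∀ k t : ℝ, 0 < k → 0 < t → 1 ≤ k * t →
      ∀ F G : EuclideanSpace ℝ (Fin d) → ℝ, Measurable F → Measurable G →
        (∀ ξ, 0 ≤ F ξ) → (∀ ξ, 0 ≤ G ξ) →
        (∫⁻ ξ in {ξ | 3 * k * t / 2 < xiMinusNorm ξ},
            ENNReal.ofReal ((1 + ‖ξ‖ ^ 2) ^ s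
              * ((xiMinusNorm ξ + k * t) ^ 2 + xiLast (by omega) ξ ^ 2) ^ (-(1 / 2) : ℝ)
              * F ξ * G ξ)) ≤
          ENNReal.ofReal (C * (k * t) ^ (2 * s - 1))
            * (∫⁻ ξ, ENNReal.ofReal (F ξ ^ 2)) ^ (1 / 2 : ℝ)
            * (∫⁻ ξ, ENNReal.ofReal (G ξ ^ 2)) ^ (1 / 2 : ℝ) := by
  refine ⟨2 ^ s, by positivity, fun k t hk ht hkt F G hF hG hF0 hG0 => ?_⟩
  exact setLIntegral_ofReal_mul_mul_le volume _ (by positivity)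
    (one_add_norm_sq_rpow_mul_rpow_neg_half_le (by omega) hs hs' hkt) hF hG hF0 hG0
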